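/- arXiv:1603.08316 — 5 statements merged into one kernel-verified Lean document; each statement's English description precedes it below -/
import Mathlib

section
/- Let k_E/k_F be a finite extension of finite fields and ψ a nontrivial additive character of k_F. Fix non-negative integers n, m. Then the function a ↦ Kl_a^{n,m}(ψ; k_E/k_F) is not constant on k_F^×, provided k_F^× has a nontrivial character (i.e., |k_F| > 2). -/
/-!
Twisting by a nontrivial multiplicative character `χ` of `k_F` and summing over `a ∈ k_F^×`
turns the constraint `Nr(t₁)⋯Nr(t_n)·s₁⋯s_m = a` into a product: the Mellin transform of
`a ↦ Kl_a^{n,m}` at `χ` is `g(χ ∘ Nr, ψ ∘ Tr)^n · g(χ, ψ)^m`, a product of Gauss sums of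
nontrivial characters (the norm of finite fields is surjective), hence nonzero. For a constant
function the Mellin transform vanishes, since `∑_a χ(a) = 0`.
-/

open Finset

/-- The Kloosterman sum `Kl_a^{n,m}(ψ; k_E/k_F)`:
the sum of `ψ(Tr(t₁+⋯+t_n))·ψ(s₁+⋯+s_m)` over `t₁,…,t_n ∈ k_E^×` and
`s₁,…,s_m ∈ k_F^×` with `Nr(t₁)⋯Nr(t_n)·s₁⋯s_m = a`. -/
noncomputable def Kl (kF kE : Type) [Field kF] [Fintype kF] [DecidableEq kF]
    [Field kE] [Fintype kE] [DecidableEq kE] [Algebra kF kE]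
    (ψ : AddChar kF ℂ) (n m : ℕ) (a : kF) : ℂ :=
  ∑ t : Fin n → kEˣ, ∑ s : Fin m → kFˣ,
    if (∏ i, Algebra.norm kF ((t i : kE))) * (∏ j, ((s j : kF))) = a then
      ψ (Algebra.trace kF kE (∑ i, ((t i : kE)))) * ψ (∑ j, ((s j : kF)))
    else 0

lemma AddChar.map_sum_eq_prod {A M ι : Type*} [AddCommMonoid A] [CommMonoid M]
    (ψ : AddChar A M) (s : Finset ι) (f : ι → A) : ψ (∑ i ∈ s, f i) = ∏ i ∈ s, ψ (f i) := by
  classical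
  induction s using Finset.induction_on with
  | empty => simp
  | insert _ _ h ih => rw [sum_insert h, prod_insert h, map_add_eq_mul, ih]

lemma AddChar.compAddMonoidHom_ne_one {A B M : Type*} [AddMonoid A] [AddMonoid B] [Monoid M]
    {ψ : AddChar B M} (hψ : ψ ≠ 1) {f : A →+ B} (hf : Function.Surjective f) :
    ψ.compAddMonoidHom f ≠ 1 :=
  (compAddMonoidHom_injective_left f hf).ne hψ

namespace MulChar

section Units

variable {R R' : Type*} [CommRing R] [Fintype R] [DecidableEq R] [CommRing R']

lemma sum_units_mul_eq_sum (χ : MulChar R R') (f : R → R') :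
    ∑ u : Rˣ, χ u * f u = ∑ x, χ x * f x := by
  refine (sum_map univ ⟨Units.val, Units.val_injective⟩ fun x => χ x * f x).symm.trans ?_
  refine sum_subset (subset_univ _) fun x _ hx => ?_
  have hx : ¬IsUnit x := fun ⟨u, hu⟩ => hx (mem_map.mpr ⟨u, mem_univ u, hu⟩)
  rw [χ.map_nonunit hx, zero_mul]

lemma sum_units_mul_ite_eq (χ : MulChar R R') (x : R) (c : R') :
    ∑ u : Rˣ, χ u * (if x = u then c else 0) = χ x * c := by
  rw [χ.sum_units_mul_eq_sum fun y => if x = y then c else 0]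
  simp [mul_ite]

lemma sum_units_eq_zero_of_ne_one [IsDomain R'] {χ : MulChar R R'} (hχ : χ ≠ 1) :
    ∑ u : Rˣ, χ u = 0 := by
  have h := χ.sum_units_mul_eq_sum 1
  simp only [Pi.one_apply, mul_one] at h
  rw [h, sum_eq_zero_of_ne_one hχ]

end Units

lemma exists_ne_one_of_two_lt_card {F : Type*} [Field F] [Fintype F] [DecidableEq F]
    (hF : 2 < Fintype.card F) : ∃ χ : MulChar F ℂ, χ ≠ 1 := by
  have hunits : 1 < Fintype.card Fˣ := by rw [Fintype.card_units]; omega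
  obtain ⟨u, hu⟩ := Fintype.exists_ne_of_one_lt_card hunits 1
  have : NeZero ((Monoid.exponent Fˣ : ℕ) : ℂ) :=
    ⟨Nat.cast_ne_zero.mpr Monoid.exponent_ne_zero_of_finite⟩
  obtain ⟨χ, hχ⟩ := exists_apply_ne_one_of_hasEnoughRootsOfUnity F ℂ (mt Units.val_eq_one.mp hu)
  exact ⟨χ, ne_one_iff.mpr ⟨u, hχ⟩⟩

noncomputable def compNorm {R S R' : Type*} [CommRing R] [CommRing S] [Algebra R S]
    [CommRing R'] (χ : MulChar R R') : MulChar S R' :=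
  ofUnitHom (χ.toUnitHom.comp (Units.map (Algebra.norm R)))

lemma compNorm_apply_units {R S R' : Type*} [CommRing R] [CommRing S] [Algebra R S]
    [CommRing R'] (χ : MulChar R R') (u : Sˣ) :
    χ.compNorm (S := S) u = χ (Algebra.norm R (u : S)) := by
  simp [compNorm]

lemma compNorm_ne_one {K L R' : Type*} [Field K] [Field L] [Algebra K L] [Finite L]
    [CommRing R'] {χ : MulChar K R'} (hχ : χ ≠ 1) : χ.compNorm (S := L) ≠ 1 := by
  obtain ⟨a, ha⟩ := ne_one_iff.mp hχ
  obtain ⟨u, rfl⟩ := FiniteField.unitsMap_norm_surjective K L a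
  exact ne_one_iff.mpr ⟨u, by rwa [compNorm_apply_units]⟩

end MulChar

lemma gaussSum_eq_sum_units {R R' : Type*} [CommRing R] [Fintype R] [DecidableEq R]
    [CommRing R'] (χ : MulChar R R') (ψ : AddChar R R') :
    gaussSum χ ψ = ∑ u : Rˣ, χ u * ψ u :=
  (χ.sum_units_mul_eq_sum ψ).symm

lemma gaussSum_ne_zero_of_ne_one {F R' : Type*} [Field F] [Fintype F] [CommRing R']
    [IsDomain R'] [CharZero R'] {χ : MulChar F R'} (hχ : χ ≠ 1) {ψ : AddChar F R'}
    (hψ : ψ ≠ 1) : gaussSum χ ψ ≠ 0 :=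
  gaussSum_ne_zero_of_nontrivial (Nat.cast_ne_zero.mpr Fintype.card_ne_zero) hχ
    (AddChar.IsPrimitive.of_ne_one hψ)

section Kloosterman

variable {kF kE : Type} [Field kF] [Fintype kF] [DecidableEq kF]
    [Field kE] [Fintype kE] [DecidableEq kE] [Algebra kF kE]

theorem sum_mulChar_mul_Kl (ψ : AddChar kF ℂ) (n m : ℕ) (χ : MulChar kF ℂ) :
    ∑ a : kFˣ, χ a * Kl kF kE ψ n m a =
      gaussSum (χ.compNorm (S := kE)) (ψ.compAddMonoidHom (Algebra.trace kF kE).toAddMonoidHom) ^ n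
        * gaussSum χ ψ ^ m := by
  have hterm : ∀ (t : Fin n → kEˣ) (s : Fin m → kFˣ),
      χ ((∏ i, Algebra.norm kF (t i : kE)) * ∏ j, (s j : kF)) *
          (ψ (Algebra.trace kF kE (∑ i, (t i : kE))) * ψ (∑ j, (s j : kF))) =
        (∏ i, χ (Algebra.norm kF (t i : kE)) * ψ (Algebra.trace kF kE (t i))) *
          ∏ j, χ (s j) * ψ (s j) := by
    intro t s
    rw [map_mul, map_prod, map_prod, map_sum, AddChar.map_sum_eq_prod, AddChar.map_sum_eq_prod,
      prod_mul_distrib, prod_mul_distrib]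
    ring
  calc ∑ a : kFˣ, χ a * Kl kF kE ψ n m a
      = ∑ t : Fin n → kEˣ, ∑ s : Fin m → kFˣ,
          χ ((∏ i, Algebra.norm kF (t i : kE)) * ∏ j, (s j : kF)) *
            (ψ (Algebra.trace kF kE (∑ i, (t i : kE))) * ψ (∑ j, (s j : kF))) := by
        simp only [Kl, mul_sum]
        rw [sum_comm]
        refine sum_congr rfl fun t _ => ?_
        rw [sum_comm]
        simp only [MulChar.sum_units_mul_ite_eq]
    _ = (∑ t : Fin n → kEˣ, ∏ i, χ (Algebra.norm kF (t i : kE)) * ψ (Algebra.trace kF kE (t i))) *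
          ∑ s : Fin m → kFˣ, ∏ j, χ (s j) * ψ (s j) := by
        simp only [hterm, sum_mul_sum]
    _ = _ := by
        rw [gaussSum_eq_sum_units, gaussSum_eq_sum_units, Fintype.sum_pow, Fintype.sum_pow]
        simp [MulChar.compNorm_apply_units]

end Kloosterman

/-- The Kloosterman sum `a ↦ Kl_a^{n,m}(ψ; k_E/k_F)` is not constant on `k_F^×`,
provided `k_F^×` admits a nontrivial character, i.e. `|k_F| > 2`. -/
theorem stmt1 (kF kE : Type) [Field kF] [Fintype kF] [DecidableEq kF]
    [Field kE] [Fintype kE] [DecidableEq kE] [Algebra kF kE]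
    (ψ : AddChar kF ℂ) (hψ : ψ ≠ 1) (n m : ℕ) (hcard : 2 < Fintype.card kF) :
    ¬ ∀ a b : kFˣ, Kl kF kE ψ n m (a : kF) = Kl kF kE ψ n m (b : kF) := by
  intro hconst
  obtain ⟨χ, hχ⟩ := MulChar.exists_ne_one_of_two_lt_card hcard
  have hψE : ψ.compAddMonoidHom (Algebra.trace kF kE).toAddMonoidHom ≠ 1 :=
    AddChar.compAddMonoidHom_ne_one hψ (Algebra.trace_surjective kF kE)
  have hmellin : ∑ a : kFˣ, χ a * Kl kF kE ψ n m a ≠ 0 := by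
    rw [sum_mulChar_mul_Kl]
    exact mul_ne_zero (pow_ne_zero n (gaussSum_ne_zero_of_ne_one (MulChar.compNorm_ne_one hχ) hψE))
      (pow_ne_zero m (gaussSum_ne_zero_of_ne_one hχ hψ))
  apply hmellin
  simp_rw [hconst _ 1]
  rw [← sum_mul, MulChar.sum_units_eq_zero_of_ne_one hχ, zero_mul]
end

section
/- Let k_E/k_F be a finite extension of finite fields and ψ a nontrivial additive character of k_F. Fix non-negative integers n, m. Then there exists a ∈ k_F^× such that Kl_a^{n,m}(ψ; k_E/k_F) ≠ 0. -/
/-!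
Summing `Kl_a` over all `a ∈ k_F` removes the norm condition, so the total factors as
`(∑_{x ∈ k_E^×} ψ(Tr x))^n · (∑_{x ∈ k_F^×} ψ x)^m`. Both `ψ` and `ψ ∘ Tr` are nontrivial (the
trace is surjective), so each inner sum is `0 - ψ 0 = -1` and the total is `±1`. Since norms of
units are units, `Kl_0 = 0`, hence some `a ∈ k_F^×` carries a nonzero term.
-/

open Finset

namespace AddChar

lemma map_sum_eq_prod_s2 {A M ι : Type*} [AddCommMonoid A] [CommMonoid M] (ψ : AddChar A M)
    (s : Finset ι) (f : ι → A) : ψ (∑ i ∈ s, f i) = ∏ i ∈ s, ψ (f i) :=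
  map_prod ψ.toMonoidHom (fun i => Multiplicative.ofAdd (f i)) s

lemma sum_pi_map_sum {A R G : Type*} [AddCommMonoid A] [CommSemiring R] [Fintype G]
    (ψ : AddChar A R) (f : G → A) (n : ℕ) :
    ∑ t : Fin n → G, ψ (∑ i, f (t i)) = (∑ x, ψ (f x)) ^ n := by
  simp only [map_sum_eq_prod_s2, Fintype.sum_pow]

lemma compAddMonoidHom_ne_one_s2 {A B M : Type*} [AddMonoid A] [AddMonoid B] [Monoid M]
    {ψ : AddChar B M} (hψ : ψ ≠ 1) {f : A →+ B} (hf : Function.Surjective f) :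
    ψ.compAddMonoidHom f ≠ 1 :=
  fun h => hψ (compAddMonoidHom_injective_left f hf (h.trans rfl))

lemma sum_units_eq_neg_one {K R : Type*} [Field K] [Fintype K] [DecidableEq K] [CommRing R]
    [IsDomain R] [CharZero R] {ψ : AddChar K R} (hψ : ψ ≠ 1) : ∑ x : Kˣ, ψ x = -1 := by
  have h := sum_eq_zero_iff_ne_zero.2 hψ
  rw [Fintype.sum_eq_add_sum_subtype_ne _ 0, map_zero_eq_one, add_comm,
    add_eq_zero_iff_eq_neg] at h
  rw [← h]
  exact Fintype.sum_equiv unitsEquivNeZero _ _ fun _ => rfl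

end AddChar

lemma sum_units_trace_eq_neg_one {kF kE R : Type*} [Field kF] [Fintype kF] [Field kE]
    [Fintype kE] [DecidableEq kE] [Algebra kF kE] [CommRing R] [IsDomain R] [CharZero R]
    {ψ : AddChar kF R} (hψ : ψ ≠ 1) :
    ∑ x : kEˣ, ψ (Algebra.trace kF kE x) = -1 :=
  AddChar.sum_units_eq_neg_one (ψ := ψ.compAddMonoidHom (Algebra.trace kF kE).toAddMonoidHom)
    (AddChar.compAddMonoidHom_ne_one_s2 hψ (Algebra.trace_surjective kF kE))

section Kl

variable (kF kE : Type) [Field kF] [Fintype kF] [DecidableEq kF]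
    [Field kE] [Fintype kE] [DecidableEq kE] [Algebra kF kE] (ψ : AddChar kF ℂ) (n m : ℕ)

lemma Kl_zero : Kl kF kE ψ n m 0 = 0 := by
  refine sum_eq_zero fun t _ => sum_eq_zero fun s _ => if_neg ?_
  exact mul_ne_zero (prod_ne_zero_iff.2 fun i _ => Algebra.norm_ne_zero_iff.2 (t i).ne_zero)
    (prod_ne_zero_iff.2 fun j _ => (s j).ne_zero)

lemma sum_Kl : ∑ a, Kl kF kE ψ n m a =
    (∑ x : kEˣ, ψ (Algebra.trace kF kE x)) ^ n * (∑ x : kFˣ, ψ x) ^ m := by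
  simp only [Kl, sum_comm (γ := kF), sum_ite_eq, mem_univ, if_true, map_sum, ← sum_mul_sum,
    AddChar.sum_pi_map_sum ψ (fun x : kEˣ => Algebra.trace kF kE x), AddChar.sum_pi_map_sum]

end Kl

/-- The Kloosterman sum `Kl_a^{n,m}(ψ; k_E/k_F)` is nonzero for some `a ∈ k_F^×`. -/
theorem stmt2 (kF kE : Type) [Field kF] [Fintype kF] [DecidableEq kF]
    [Field kE] [Fintype kE] [DecidableEq kE] [Algebra kF kE]
    (ψ : AddChar kF ℂ) (hψ : ψ ≠ 1) (n m : ℕ) :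
    ∃ a : kFˣ, Kl kF kE ψ n m (a : kF) ≠ 0 := by
  have hsum : ∑ a, Kl kF kE ψ n m a ≠ 0 := by
    rw [sum_Kl, sum_units_trace_eq_neg_one (kE := kE) hψ, AddChar.sum_units_eq_neg_one hψ]
    simp
  obtain ⟨a, -, ha⟩ := exists_ne_zero_of_sum_ne_zero hsum
  have ha0 : a ≠ 0 := by
    rintro rfl
    exact ha (Kl_zero kF kE ψ n m)
  exact ⟨Units.mk0 a ha0, ha⟩
end

section
/- Let E be a nonarchimedean local field (or more generally a complete discretely valued field) with ring of integers O_E, maximal ideal p_E, and fix a uniformizer ϖ. Let g ∈ GL_N(E) be a matrix with g_{ii} ∈ 1 + p_E for all i, g_{i,i+1} ∈ O_E^× for 1 ≤ i ≤ N−1, g_{N,1} ∈ ϖ·O_E^×, g_{ij} ∈ O_E for i < j, and g_{ij} ∈ p_E for i > j (with (i,j) ≠ (N,1) having g_{N1} of valuation exactly 1). Then the characteristic polynomial of g − I_N is an Eisenstein polynomial over O_E; in particular it is irreducible over E and g is a regular semisimple element of GL_N(E). -/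
open Polynomial Matrix IsLocalRing

/-!
Write `A = g - 1`. Modulo the maximal ideal `𝔭`, `A` is strictly upper triangular, so its
characteristic polynomial reduces to `X ^ N`, and its constant term is `± det A`. In the Leibniz
expansion of `det A`, every permutation other than the cycle `i ↦ i + 1` has at least two weak
descents `σ i ≤ i`, hence picks two entries from `𝔭`; the cycle contributes the unit
superdiagonal times the corner entry `ϖ u`. Hence `det A ∉ 𝔭 ^ 2` and the characteristic
polynomial of `A` is Eisenstein, so irreducible over `E` by Gauss's lemma. That of `g` is a
translate of it, so it is irreducible too, and separable in characteristic zero.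
-/

theorem Irreducible.notMem_maximalIdeal_sq {R : Type*} [CommRing R] [IsDomain R]
    [IsDiscreteValuationRing R] {ϖ : R} (h : Irreducible ϖ) : ϖ ∉ maximalIdeal R ^ 2 := by
  intro hϖ
  refine ((maximalIdeal_sq_lt_maximalIdeal R).2 (IsDiscreteValuationRing.not_isField R)).not_ge ?_
  rw [h.maximalIdeal_eq] at hϖ ⊢
  exact Ideal.span_le.2 (Set.singleton_subset_iff.2 hϖ)

namespace Equiv.Perm

theorem eq_of_forall_le {n : ℕ} {σ τ : Perm (Fin n)} (h : ∀ i, σ i ≤ τ i) : σ = τ := by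
  have hsum : ∑ i, (σ i : ℕ) = ∑ i, (τ i : ℕ) := by
    rw [Equiv.sum_comp σ (fun i => (i : ℕ)), Equiv.sum_comp τ (fun i => (i : ℕ))]
  ext i
  exact (Finset.sum_eq_sum_iff_of_le fun i _ => Fin.le_def.1 (h i)).1 hsum i (Finset.mem_univ _)

theorem exists_ne_apply_le_apply_le_of_ne_finRotate {n : ℕ} {σ : Perm (Fin (n + 1))}
    (hσ : σ ≠ finRotate (n + 1)) : ∃ i j, i ≠ j ∧ σ i ≤ i ∧ σ j ≤ j := by
  by_contra! h
  -- `Fin.last n` is always a weak descent, so every other `i` has `i < σ i`: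
  -- `σ` dominates the cycle `i ↦ i + 1` pointwise.
  refine hσ (eq_of_forall_le fun i => ?_).symm
  rcases eq_or_ne i (Fin.last n) with rfl | hi
  · rw [finRotate_last]
    exact Fin.zero_le _
  · rw [Fin.le_def, coe_finRotate_of_ne_last hi]
    exact h (Fin.last n) i hi.symm (Fin.le_last _)

end Equiv.Perm

namespace Matrix

section Fin

variable {R : Type*} [CommRing R] {I : Ideal R} {n : ℕ}
  {A : Matrix (Fin (n + 1)) (Fin (n + 1)) R}

theorem prod_apply_perm_mem_sq (hA : ∀ i j, j ≤ i → A i j ∈ I)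
    {σ : Equiv.Perm (Fin (n + 1))} (hσ : σ ≠ finRotate (n + 1)) :
    ∏ i, A i (σ i) ∈ I ^ 2 := by
  obtain ⟨i, j, hij, hi, hj⟩ := Equiv.Perm.exists_ne_apply_le_apply_le_of_ne_finRotate hσ
  refine Ideal.mem_of_dvd _ (Finset.prod_dvd_prod_of_subset {i, j} _ _ (Finset.subset_univ _)) ?_
  rw [Finset.prod_pair hij, pow_two]
  exact Ideal.mul_mem_mul (hA _ _ hi) (hA _ _ hj)

theorem det_sub_sign_mul_prod_finRotate_mem_sq (hA : ∀ i j, j ≤ i → A i j ∈ I) :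
    A.det - Equiv.Perm.sign (finRotate (n + 1)) • ∏ i, A i (finRotate (n + 1) i) ∈ I ^ 2 := by
  rw [← det_transpose, det_apply]
  simp only [transpose_apply]
  rw [← Finset.sum_erase_eq_sub (Finset.mem_univ _)]
  exact Ideal.sum_mem _ fun σ hσ =>
    Submodule.smul_of_tower_mem _ _ (prod_apply_perm_mem_sq hA (Finset.ne_of_mem_erase hσ))

theorem det_notMem_sq (hA : ∀ i j, j ≤ i → A i j ∈ I)
    (hsup : ∀ i : Fin n, IsUnit (A i.castSucc i.succ)) (hcorner : A (Fin.last n) 0 ∉ I ^ 2) :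
    A.det ∉ I ^ 2 := by
  have hcycle : ∏ i, A i (finRotate (n + 1) i) =
      (∏ i : Fin n, A i.castSucc i.succ) * A (Fin.last n) 0 := by
    rw [Fin.prod_univ_castSucc, finRotate_last]
    congr! with i
    exact Fin.ext (by rw [coe_finRotate_of_ne_last (Fin.castSucc_lt_last i).ne]; simp)
  have hunit : IsUnit (((Equiv.Perm.sign (finRotate (n + 1)) : ℤ) : R) *
      ∏ i : Fin n, A i.castSucc i.succ) :=
    ((Units.isUnit _).map (Int.castRingHom R)).mul (IsUnit.prod_univ_iff.2 hsup)
  intro hdet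
  have := Ideal.sub_mem _ hdet (det_sub_sign_mul_prod_finRotate_mem_sq hA)
  rw [sub_sub_cancel, hcycle, Units.smul_def, zsmul_eq_mul, ← mul_assoc] at this
  exact hcorner ((Ideal.unit_mul_mem_iff_mem _ hunit).1 this)

end Fin

section LinearOrder

variable {ι R : Type*} [Fintype ι] [DecidableEq ι] [LinearOrder ι] [CommRing R] {I : Ideal R}
  {A : Matrix ι ι R}

theorem charpoly_map_quotient_eq_X_pow (hA : ∀ i j, j ≤ i → A i j ∈ I) :
    A.charpoly.map (Ideal.Quotient.mk I) = X ^ Fintype.card ι := by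
  have hA' : ∀ i j, j ≤ i → A.map (Ideal.Quotient.mk I) i j = 0 := fun i j hji =>
    Ideal.Quotient.eq_zero_iff_mem.2 (hA i j hji)
  rw [← charpoly_map, charpoly_of_isUpperTriangular _ fun i j hji => hA' i j hji.le]
  simp_rw [hA' _ _ le_rfl, map_zero, sub_zero, Finset.prod_const, Finset.card_univ]

theorem charpoly_isEisensteinAt (hA : ∀ i j, j ≤ i → A i j ∈ I) (hdet : A.det ∉ I ^ 2) :
    A.charpoly.IsEisensteinAt I := by
  have hI : I ≠ ⊤ := fun h => hdet (by simp [h, Ideal.top_pow])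
  have : Nontrivial R := ⟨0, 1, fun h => hI (I.eq_top_iff_one.2 (h ▸ I.zero_mem))⟩
  refine (charpoly_monic A).isEisensteinAt_of_mem_of_notMem hI (fun {k} hk => ?_) fun h0 => ?_
  · rw [charpoly_natDegree_eq_dim] at hk
    rw [← Ideal.Quotient.eq_zero_iff_mem, ← coeff_map, charpoly_map_quotient_eq_X_pow hA,
      coeff_X_pow, if_neg hk.ne]
  · exact hdet (det_eq_sign_charpoly_coeff A ▸ Ideal.mul_mem_left _ _ h0)

end LinearOrder

theorem irreducible_charpoly_sub_scalar_iff {n R : Type*} [Fintype n] [DecidableEq n]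
    [CommRing R] (M : Matrix n n R) (μ : R) :
    Irreducible (M - scalar n μ).charpoly ↔ Irreducible M.charpoly := by
  rw [charpoly_sub_scalar, ← taylor_apply, ← coe_taylorEquiv]
  exact MulEquiv.irreducible_iff (taylorEquiv μ)

theorem irreducible_charpoly_map_of_isEisensteinAt {O K ι : Type*} [CommRing O] [IsDomain O]
    [IsIntegrallyClosed O] [Field K] [Algebra O K] [IsFractionRing O K] [Fintype ι]
    [DecidableEq ι] [Nonempty ι] {P : Ideal O} (hP : P.IsPrime) {A : Matrix ι ι O}
    (h : A.charpoly.IsEisensteinAt P) : Irreducible (A.map (algebraMap O K)).charpoly := by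
  rw [charpoly_map, ← (charpoly_monic A).irreducible_iff_irreducible_map_fraction_map]
  exact h.irreducible hP (charpoly_monic A).isPrimitive
    (by simp [charpoly_natDegree_eq_dim, Fintype.card_pos])

theorem charpoly_sub_one_isEisensteinAt {R : Type*} [CommRing R] {I : Ideal R} {n : ℕ}
    {M : Matrix (Fin (n + 2)) (Fin (n + 2)) R} (hdiag : ∀ i, M i i - 1 ∈ I)
    (hlower : ∀ i j, j < i → M i j ∈ I)
    (hsup : ∀ i : Fin (n + 1), IsUnit (M i.castSucc i.succ))
    (hcorner : M (Fin.last (n + 1)) 0 ∉ I ^ 2) : (M - 1).charpoly.IsEisensteinAt I := by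
  have hA : ∀ i j, j ≤ i → (M - 1) i j ∈ I := by
    intro i j hji
    rcases hji.eq_or_lt with rfl | hlt
    · simpa using hdiag j
    · simpa [one_apply_ne hlt.ne'] using hlower i j hlt
  refine charpoly_isEisensteinAt hA (det_notMem_sq hA (fun i => ?_) ?_)
  · simpa [one_apply_ne (Fin.castSucc_lt_succ (i := i)).ne] using hsup i
  · simpa [one_apply_ne (Fin.last_pos).ne'] using hcorner

end Matrix

/-- An affine generic element `g` of the Iwahori subgroup of `GL_N(E)` (for `E` the fraction
field of a complete discrete valuation ring `O`, here more generally any DVR) has the property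
that the characteristic polynomial of `g − 1` is Eisenstein over `O`; in particular it is
irreducible over `E`, and `g` is regular semisimple (its characteristic polynomial is
separable). -/
theorem stmt7 (O E : Type) [CommRing O] [IsDomain O] [IsDiscreteValuationRing O]
    [Field E] [CharZero E] [Algebra O E] [IsFractionRing O E]
    (ϖ : O) (hϖ : Irreducible ϖ)
    (N : ℕ) (hN : 0 < N) (g : Matrix (Fin N) (Fin N) E)
    (hdiag : ∀ i : Fin N, ∃ x ∈ IsLocalRing.maximalIdeal O,
      g i i = algebraMap O E (1 + x))
    (hsup : ∀ i j : Fin N, (i : ℕ) + 1 = (j : ℕ) → ∃ x : Oˣ,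
      g i j = algebraMap O E x)
    (hcorner : ∃ x : Oˣ, g ⟨N - 1, by omega⟩ ⟨0, hN⟩ = algebraMap O E (ϖ * x))
    (hupper : ∀ i j : Fin N, i < j → ∃ x : O, g i j = algebraMap O E x)
    (hlower : ∀ i j : Fin N, j < i → ∃ x ∈ IsLocalRing.maximalIdeal O,
      g i j = algebraMap O E x) :
    (∃ q : Polynomial O, q.IsEisensteinAt (IsLocalRing.maximalIdeal O) ∧
        q.map (algebraMap O E) = (g - 1).charpoly) ∧
      Irreducible ((g - 1).charpoly) ∧ (Matrix.charpoly g).Separable := by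
  have hinj : Function.Injective (algebraMap O E) := IsFractionRing.injective O E
  obtain ⟨M, rfl⟩ : ∃ M : Matrix (Fin N) (Fin N) O, M.map (algebraMap O E) = g := by
    have hint : ∀ i j, ∃ x : O, g i j = algebraMap O E x := fun i j => by
      rcases lt_trichotomy i j with h | rfl | h
      · exact hupper i j h
      · obtain ⟨x, -, hx⟩ := hdiag i
        exact ⟨_, hx⟩
      · obtain ⟨x, -, hx⟩ := hlower i j h
        exact ⟨_, hx⟩
    choose M hM using hint
    exact ⟨M, Matrix.ext fun i j => (hM i j).symm⟩
  simp only [map_apply, hinj.eq_iff, exists_eq_right'] at hdiag hsup hcorner hlower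
  obtain ⟨u, hu⟩ := hcorner
  obtain ⟨n, rfl⟩ : ∃ n, N = n + 2 := by
    rcases N with _ | _ | n
    · omega
    · -- for `N = 1` the corner entry is the diagonal one, which would be both a unit and in `𝔭`
      obtain ⟨x, hx, hMx⟩ := hdiag 0
      have h1 : (1 : O) = ϖ * u - x := by linear_combination hMx.symm.trans hu
      refine absurd ((Ideal.eq_top_iff_one _).2 ?_) (maximalIdeal.isMaximal O).ne_top
      exact h1 ▸ sub_mem (Ideal.mul_mem_right _ _ ((mem_maximalIdeal ϖ).2 hϖ.not_isUnit)) hx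
    · exact ⟨n, rfl⟩
  have heis : (M - 1).charpoly.IsEisensteinAt (maximalIdeal O) := by
    refine charpoly_sub_one_isEisensteinAt (fun i => ?_) hlower (fun i => ?_) ?_
    · obtain ⟨x, hx, hMx⟩ := hdiag i
      simpa [hMx] using hx
    · obtain ⟨x, hMx⟩ := hsup i.castSucc i.succ rfl
      simp [hMx]
    · change M ⟨n + 2 - 1, by omega⟩ ⟨0, hN⟩ ∉ _
      rw [hu, Ideal.mul_unit_mem_iff_mem _ u.isUnit]
      exact hϖ.notMem_maximalIdeal_sq
  have hsub : M.map (algebraMap O E) - 1 = (M - 1).map (algebraMap O E) := by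
    rw [Matrix.map_sub _ (map_sub _), Matrix.map_one _ (map_zero _) (map_one _)]
  have hirr : Irreducible (M.map (algebraMap O E) - 1).charpoly :=
    hsub ▸ irreducible_charpoly_map_of_isEisensteinAt (maximalIdeal.isMaximal O).isPrime heis
  refine ⟨⟨_, heis, by rw [hsub, charpoly_map]⟩, hirr, ?_⟩
  exact ((irreducible_charpoly_sub_scalar_iff _ 1).1 (by rwa [map_one])).separable
end

section
/- Let k_E/k_F be a quadratic extension of finite fields with conjugation c, ψ a nontrivial additive character of k_F, and h₁, …, h_{n−1} ∈ k_E^×, h_n, h' ∈ k_F^×, b ∈ k_F^×. Then Σ ψ(Tr(t₁/t₂·h₁ + ⋯ + t_{n−1}/t_n·h_{n−1}))·ψ(t_n·c(t_n)·h_n + b·h'/(t₁·c(t₁))), summing over t₁,…,t_{n−1} ∈ k_E^× and t_n ranging over a set of representatives of k_E^×/U(1), equals Kl^{n−1,2}_{Nr(h₁)⋯Nr(h_{n−1})·h_n·h'·b}(ψ; k_E/k_F), where U(1) = ker(Nr: k_E^× → k_F^×). -/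
/-!
Put `r_i = t_i / t_{i+1}` for `i < n`. The tuple `(t_1, …, t_n)` is determined by `(r, t_n)`, and
the ratios telescope: `Nr(r_1)⋯Nr(r_{n−1}) = Nr(t_1) / Nr(t_n)`. The norm `k_E^× → k_F^×` is
surjective, so as `t_n` runs over the representatives of `k_E^×/U(1)` its norm runs once over
`k_F^×`. The substitutions `t'_i = r_i h_i`, `s₁ = Nr(t_n) h_n`, `s₂ = b h' / Nr(t_1)` then turn the
sum into the Kloosterman sum, since `Nr(t'_1)⋯Nr(t'_{n−1}) s₁ s₂ = Nr(h_1)⋯Nr(h_{n−1}) h_n h' b`.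
-/

open Finset

namespace Fin

theorem prod_castSucc_div_succ {G : Type*} [CommGroup G] :
    ∀ {n : ℕ} (f : Fin (n + 1) → G), ∏ i : Fin n, f i.castSucc / f i.succ = f 0 / f (last n)
  | 0, f => by simp
  | n + 1, f => by
    have ih := prod_castSucc_div_succ (f ∘ succ)
    simp only [Function.comp_apply] at ih
    rw [prod_univ_succ]
    simp [ih]

def ratiosLastEquiv (G : Type*) [Group G] (n : ℕ) : (Fin (n + 1) → G) ≃ (Fin n → G) × G where
  toFun T := (fun i => T i.castSucc / T i.succ, T (last n))
  invFun p := reverseInduction p.2 fun i x => p.1 i * x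
  left_inv T := by
    funext j
    induction j using reverseInduction with
    | last => simp
    | cast i ih => simp [reverseInduction_castSucc, ih]
  right_inv p := by
    ext i
    · simp [reverseInduction_castSucc]
    · simp

end Fin

theorem Finset.sum_representatives_comp {α β M : Type*} [Fintype β] [AddCommMonoid M]
    {N : α → β} (hN : Function.Surjective N) {R : Finset α}
    (hR : ∀ z, ∃! t, t ∈ R ∧ N z = N t) (f : β → M) :
    ∑ x ∈ R, f (N x) = ∑ u, f u := by
  refine sum_nbij N (fun _ _ => mem_univ _) ?_ ?_ fun _ _ => rfl
  · intro x hx y hy hxy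
    exact (hR x).unique ⟨hx, rfl⟩ ⟨hy, hxy⟩
  · intro u _
    obtain ⟨z, rfl⟩ := hN u
    obtain ⟨t, ⟨ht, hzt⟩, -⟩ := hR z
    exact ⟨t, ht, hzt.symm⟩

section Kloosterman

variable (kF kE : Type) [Field kF] [Fintype kF] [DecidableEq kF]
    [Field kE] [Fintype kE] [DecidableEq kE] [Algebra kF kE] (ψ : AddChar kF ℂ) (n : ℕ)

theorem Kl_two_eq_sum (a : kFˣ) :
    Kl kF kE ψ n 2 a = ∑ t : Fin n → kEˣ, ∑ u : kFˣ,
      ψ (Algebra.trace kF kE (∑ i, (t i : kE))) *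
        ψ (u + a / ((∏ i, Algebra.norm kF (t i : kE)) * u)) := by
  refine sum_congr rfl fun t _ => ?_
  set P : kFˣ := ∏ i, Units.map (Algebra.norm kF : kE →* kF) (t i)
  have hP : (P : kF) = ∏ i, Algebra.norm kF (t i : kE) := by simp [P]
  have hsolve (x y : kFˣ) : P * (x * y) = a ↔ y = a / (P * x) := by
    rw [eq_div_iff_mul_eq', mul_comm y, mul_assoc]
  rw [← hP, Fintype.sum_equiv (finTwoArrowEquiv kFˣ) _
    (fun s => if P * (s.1 * s.2) = a then
      ψ (Algebra.trace kF kE (∑ i, (t i : kE))) * ψ (s.1 + s.2) else 0), Fintype.sum_prod_type]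
  · simp [hsolve]
  · intro s
    simp [Fin.prod_univ_two, Fin.sum_univ_two, Units.ext_iff]

theorem Kl_two_norm_prod_mul_mul (h : Fin n → kEˣ) (c a : kFˣ) :
    Kl kF kE ψ n 2 ((∏ i, Algebra.norm kF (h i : kE)) * c * a) = ∑ r : Fin n → kEˣ, ∑ u : kFˣ,
      ψ (Algebra.trace kF kE (∑ i, (r i : kE) * h i)) *
        ψ (u * c + a / ((∏ i, Algebra.norm kF (r i : kE)) * u)) := by
  set Nm : kEˣ →* kFˣ := Units.map (Algebra.norm kF : kE →* kF)
  have hNm (z : kEˣ) : (Nm z : kF) = Algebra.norm kF (z : kE) := rfl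
  have hh : ∏ i, Algebra.norm kF (h i : kE) ≠ 0 :=
    prod_ne_zero_iff.2 fun i _ => hNm (h i) ▸ (Nm (h i)).ne_zero
  have ha : (∏ i, Algebra.norm kF (h i : kE)) * c * a = (((∏ i, Nm (h i)) * c * a : kFˣ) : kF) := by
    simp [hNm]
  rw [ha, Kl_two_eq_sum]
  symm
  refine Fintype.sum_equiv (Equiv.mulRight h) _ _ fun r => ?_
  refine Fintype.sum_equiv (Equiv.mulRight c) _ _ fun u => ?_
  simp only [Equiv.coe_mulRight, Pi.mul_apply, Units.val_mul, map_mul, prod_mul_distrib,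
    Units.coe_prod, hNm]
  congr 3
  field_simp

end Kloosterman

/-- Here the paper's `n` is `n + 1`, the paper's `h₁,…,h_{n−1}` are `h : Fin n → kEˣ`, and `t_n`
runs over the set `R` of representatives of `k_E^×/U(1)`. -/
theorem stmt12_general (kF kE : Type) [Field kF] [Fintype kF] [DecidableEq kF]
    [Field kE] [Fintype kE] [DecidableEq kE] [Algebra kF kE]
    (ψ : AddChar kF ℂ)
    (n : ℕ) (h : Fin n → kEˣ) (hn h' b : kFˣ)
    (R : Finset kEˣ)
    (hR : ∀ z : kEˣ, ∃! t : kEˣ, t ∈ R ∧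
      Algebra.norm kF (z : kE) = Algebra.norm kF (t : kE)) :
    (∑ T : Fin (n + 1) → kEˣ,
        if T (Fin.last n) ∈ R then
          ψ (Algebra.trace kF kE
              (∑ i : Fin n, ((T i.castSucc : kE) / (T i.succ : kE)) * (h i : kE))) *
            ψ (Algebra.norm kF ((T (Fin.last n) : kE)) * (hn : kF) +
                (b : kF) * (h' : kF) / Algebra.norm kF ((T 0 : kE)))
        else 0) =
      Kl kF kE ψ n 2
        ((∏ i, Algebra.norm kF ((h i : kE))) * (hn : kF) * (h' : kF) * (b : kF)) := by
  set Nm : kEˣ →* kFˣ := Units.map (Algebra.norm kF : kE →* kF)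
  have hNm (z : kEˣ) : (Nm z : kF) = Algebra.norm kF (z : kE) := rfl
  have hR' : ∀ z, ∃! t, t ∈ R ∧ Nm z = Nm t := by simpa only [Units.ext_iff, hNm] using hR
  let F (r : Fin n → kEˣ) (u : kFˣ) : ℂ :=
    ψ (Algebra.trace kF kE (∑ i, (r i : kE) * h i)) *
      ψ (u * hn + (h' * b : kFˣ) / ((∏ i, Algebra.norm kF (r i : kE)) * u))
  calc _ = ∑ p : (Fin n → kEˣ) × kEˣ, if p.2 ∈ R then F p.1 (Nm p.2) else 0 := by
        refine Fintype.sum_equiv (Fin.ratiosLastEquiv kEˣ n) _ _ fun T => ?_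
        have htel : (∏ i : Fin n, Nm (T i.castSucc / T i.succ)) * Nm (T (Fin.last n)) =
            Nm (T 0) := by
          simp only [map_div]
          rw [Fin.prod_castSucc_div_succ (fun j => Nm (T j)), div_mul_cancel]
        rw [← hNm (T 0), ← htel, mul_comm (b : kF)]
        simp only [Fin.ratiosLastEquiv, Equiv.coe_fn_mk, F, Units.val_mul, Units.coe_prod, hNm,
          Units.val_div_eq_div_val]
    _ = ∑ r, ∑ u, F r u := by
        rw [Fintype.sum_prod_type]
        refine sum_congr rfl fun r _ => ?_
        rw [sum_ite_mem, univ_inter]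
        exact sum_representatives_comp (FiniteField.unitsMap_norm_surjective kF kE) hR' (F r)
    _ = _ := by rw [mul_assoc _ (h' : kF), ← Units.val_mul, Kl_two_norm_prod_mul_mul]

/-- The character sum appearing in the computation of characters of simple supercuspidal
representations of `U_{E/F}(2n)` equals the Kloosterman sum
`Kl^{n−1,2}_{Nr(h₁)⋯Nr(h_{n−1})·h_n·h'·b}` (here the paper's `n` is `n + 1`, the variables
`h₁,…,h_{n−1}` are `h : Fin n → kEˣ`, and `t_n` runs over a set `R` of representatives of
`k_E^×/U(1)`). -/
theorem stmt12 (kF kE : Type) [Field kF] [Fintype kF] [DecidableEq kF]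
    [Field kE] [Fintype kE] [DecidableEq kE] [Algebra kF kE]
    (hdeg : Module.finrank kF kE = 2)
    (c : kE ≃ₐ[kF] kE) (hc : c ≠ AlgEquiv.refl)
    (hnorm : ∀ z : kE, algebraMap kF kE (Algebra.norm kF z) = z * c z)
    (ψ : AddChar kF ℂ) (hψ : ψ ≠ 1)
    (n : ℕ) (h : Fin n → kEˣ) (hn h' b : kFˣ)
    (R : Finset kEˣ)
    (hR : ∀ z : kEˣ, ∃! t : kEˣ, t ∈ R ∧
      Algebra.norm kF (z : kE) = Algebra.norm kF (t : kE)) :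
    (∑ T : Fin (n + 1) → kEˣ,
        if T (Fin.last n) ∈ R then
          ψ (Algebra.trace kF kE
              (∑ i : Fin n, ((T i.castSucc : kE) / (T i.succ : kE)) * (h i : kE))) *
            ψ (Algebra.norm kF ((T (Fin.last n) : kE)) * (hn : kF) +
                (b : kF) * (h' : kF) / Algebra.norm kF ((T 0 : kE)))
        else 0) =
      Kl kF kE ψ n 2
        ((∏ i, Algebra.norm kF ((h i : kE))) * (hn : kF) * (h' : kF) * (b : kF)) :=
  stmt12_general kF kE ψ n h hn h' b R hR
end

section
/- Let E/F be a quadratic unramified extension of p-adic fields (p odd) with conjugation c and uniformizer ϖ ∈ F. Let u ∈ O_F^× and N = 2n. Set g = 1 + φ_u ∈ GL_N(E) where φ_u has superdiagonal 1's and lower-left entry ϖu. Then N(g) := g·θ(g) = (1 − ϖu)^{−1}·M, where θ(g) = J·ᵗc(g)^{−1}·J^{−1} (J antidiagonal with alternating signs) and M is the matrix with M_{ii} = 1 + ϖu, M_{ij} = 2 for i < j, and M_{ij} = 2ϖu for i > j. Moreover N(g) satisfies ᵗc(N(g))·J·N(g) = J, i.e., N(g) lies in the unitary group U_{E/F}(N)(F).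 -/
/-!
Write `a = ϖu` and `φ = φ_u`. Because `N` is even, `J² = -1` and `J φᵀ = -φ J` (the corner
entry picks up the sign `(-1)^(N-1) = -1`); as `φ` has entries in `F`, this gives
`θ(1 + φ) = (1 - φ)⁻¹`. So `N(g) = (1 + φ)(1 - φ)⁻¹` is the Cayley transform of `φ`, which lies
in the Lie algebra `{X | Xᵀ J + J X = 0}`, and Cayley transforms of such elements preserve `J`. The explicit shape of `N(g)` comes from the matrix `S` with `1` on and above the
diagonal and `a` below it: `(1 - φ) S = (1 - a)·1` and `(1 + φ) S = M`.
-/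

open Matrix

section Cayley

variable {n R : Type*} [Fintype n] [DecidableEq n] [CommRing R]

theorem Matrix.conj_nonsing_inv {J : Matrix n n R} (hJ : IsUnit J.det)
    (A : Matrix n n R) : J * A⁻¹ * J⁻¹ = (J * A * J⁻¹)⁻¹ := by
  rw [mul_inv_rev, mul_inv_rev, nonsing_inv_nonsing_inv J hJ, Matrix.mul_assoc]

theorem Matrix.transpose_mul_eq_neg_mul_of_mul_transpose {J X : Matrix n n R} (hJ : J * J = -1)
    (hX : J * Xᵀ = -(X * J)) : Xᵀ * J = -(J * X) :=
  calc Xᵀ * J = -(J * J * Xᵀ * J) := by rw [hJ]; noncomm_ring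
    _ = -(J * (J * Xᵀ) * J) := by simp only [Matrix.mul_assoc]
    _ = J * X * (J * J) := by rw [hX]; noncomm_ring
    _ = -(J * X) := by rw [hJ]; noncomm_ring

theorem Matrix.conj_inv_transpose_one_add {J X : Matrix n n R} (hJ : IsUnit J.det)
    (hX : J * Xᵀ = -(X * J)) : J * (1 + X)ᵀ⁻¹ * J⁻¹ = (1 - X)⁻¹ := by
  have h : J * (1 + X)ᵀ = (1 - X) * J := by
    rw [transpose_add, transpose_one, mul_add, hX]; noncomm_ring
  rw [conj_nonsing_inv hJ, h, mul_nonsing_inv_cancel_right _ _ hJ]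

theorem Matrix.cayley_transpose_mul_mul_cayley {J X : Matrix n n R} (hX : Xᵀ * J = -(J * X))
    (hX1 : IsUnit (1 - X).det) :
    ((1 + X) * (1 - X)⁻¹)ᵀ * J * ((1 + X) * (1 - X)⁻¹) = J := by
  have hleft : (1 + X)ᵀ * J = J * (1 - X) := by
    rw [transpose_add, transpose_one, add_mul, hX]; noncomm_ring
  have hright : J * (1 + X) = (1 - X)ᵀ * J := by
    rw [transpose_sub, transpose_one, sub_mul, hX]; noncomm_ring
  have hcomm : (1 - X) * (1 + X) = (1 + X) * (1 - X) := by noncomm_ring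
  calc ((1 + X) * (1 - X)⁻¹)ᵀ * J * ((1 + X) * (1 - X)⁻¹)
      = (1 - X)⁻¹ᵀ * ((1 + X)ᵀ * J) * (1 + X) * (1 - X)⁻¹ := by
        simp only [transpose_mul, Matrix.mul_assoc]
    _ = (1 - X)ᵀ⁻¹ * (J * (1 + X)) * ((1 - X) * (1 - X)⁻¹) := by
        rw [hleft, transpose_nonsing_inv]; simp only [Matrix.mul_assoc]
        rw [← Matrix.mul_assoc (1 - X) (1 + X), hcomm, Matrix.mul_assoc]
    _ = J := by
        rw [hright, mul_nonsing_inv _ hX1, mul_one, ← Matrix.mul_assoc,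
          nonsing_inv_mul _ (by rwa [det_transpose]), one_mul]

noncomputable def Matrix.twistedInvTranspose (c : R ≃+* R) (J A : Matrix n n R) : Matrix n n R :=
  J * (A.map c)ᵀ⁻¹ * J⁻¹

theorem Matrix.twistedInvTranspose_one_add {c : R ≃+* R} {J X : Matrix n n R} (hJ : IsUnit J.det)
    (hX : J * Xᵀ = -(X * J)) (hXc : X.map c = X) :
    twistedInvTranspose c J (1 + X) = (1 - X)⁻¹ := by
  rw [twistedInvTranspose, Matrix.map_add c (map_add c), hXc,
    Matrix.map_one c (map_zero c) (map_one c),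
    conj_inv_transpose_one_add hJ hX]

end Cayley

namespace CyclicShift

variable {R : Type*} [CommRing R] {N : ℕ}

def shift (N : ℕ) (a : R) : Matrix (Fin N) (Fin N) R := Matrix.of fun i j =>
  if (i : ℕ) + 1 = (j : ℕ) then 1
  else if (i : ℕ) = N - 1 ∧ (j : ℕ) = 0 then a else 0

def altAntidiag (N : ℕ) : Matrix (Fin N) (Fin N) R := Matrix.of fun i j =>
  if (i : ℕ) + (j : ℕ) + 1 = N then (-1 : R) ^ (i : ℕ) else 0

def scaledResolvent (N : ℕ) (a : R) : Matrix (Fin N) (Fin N) R := Matrix.of fun i j =>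
  if (i : ℕ) ≤ (j : ℕ) then 1 else a

def scaledCayley (N : ℕ) (a : R) : Matrix (Fin N) (Fin N) R := Matrix.of fun i j =>
  if i = j then 1 + a else if i < j then 2 else 2 * a

theorem shift_mul_apply (a : R) (A : Matrix (Fin N) (Fin N) R) (i j : Fin N) :
    (shift N a * A) i j =
      if h : (i : ℕ) + 1 < N then A ⟨i + 1, h⟩ j else a * A ⟨0, i.pos⟩ j := by
  have hi := i.isLt
  rw [mul_apply]
  split_ifs with h
  · rw [Fintype.sum_eq_single ⟨i + 1, h⟩ fun k hk => ?_]
    · rw [shift, of_apply, if_pos rfl, one_mul]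
    · have : (i : ℕ) + 1 ≠ k := fun e => hk (Fin.ext e.symm)
      rw [shift, of_apply, if_neg this, if_neg (by omega), zero_mul]
  · rw [Fintype.sum_eq_single ⟨0, i.pos⟩ fun k hk => ?_]
    · rw [shift, of_apply, if_neg (by simp), if_pos ⟨by omega, rfl⟩]
    · have : (k : ℕ) ≠ 0 := fun e => hk (Fin.ext e)
      have := k.isLt
      rw [shift, of_apply, if_neg (by omega), if_neg (by omega), zero_mul]

theorem one_sub_shift_mul_scaledResolvent (a : R) :
    (1 - shift N a) * scaledResolvent N a = (1 - a) • (1 : Matrix (Fin N) (Fin N) R) := by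
  ext i j
  rw [sub_mul, one_mul, Matrix.sub_apply, shift_mul_apply, Matrix.smul_apply, one_apply]
  have := i.isLt
  simp only [scaledResolvent, of_apply, smul_eq_mul, Fin.ext_iff]
  split_ifs <;> first | ring1 | omega

theorem one_add_shift_mul_scaledResolvent (a : R) :
    (1 + shift N a) * scaledResolvent N a = scaledCayley N a := by
  ext i j
  rw [add_mul, one_mul, Matrix.add_apply, shift_mul_apply]
  have := i.isLt
  simp only [scaledResolvent, scaledCayley, of_apply, Fin.ext_iff, Fin.lt_def]
  split_ifs <;> first | ring1 | omega

theorem altAntidiag_mul_self (hN : Even N) :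
    altAntidiag N * altAntidiag N = (-1 : Matrix (Fin N) (Fin N) R) := by
  ext i j
  rw [mul_apply, Matrix.neg_apply, one_apply, Fintype.sum_eq_single ⟨N - 1 - i, by omega⟩]
  · simp only [altAntidiag, of_apply, Fin.ext_iff]
    have := i.isLt; have := j.isLt
    split_ifs
    · rw [← pow_add, Nat.add_sub_cancel' (by omega),
        (Nat.Even.sub_odd i.pos hN odd_one).neg_one_pow]
    all_goals first | omega | simp only [mul_zero, neg_zero]
  · intro k hk
    have : (i : ℕ) + k + 1 ≠ N := fun e => hk (Fin.ext (by simp only; omega))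
    simp only [altAntidiag, of_apply, if_neg this, zero_mul]

theorem altAntidiag_mul_shift_transpose (hN : Even N) (a : R) :
    altAntidiag N * (shift N a)ᵀ = -(shift N a * altAntidiag N) := by
  ext i j
  rw [Matrix.neg_apply, ← transpose_apply (altAntidiag N * _), transpose_mul, transpose_transpose,
    shift_mul_apply, shift_mul_apply]
  have hodd : (-1 : R) ^ (N - 1) = -1 := (Nat.Even.sub_odd i.pos hN odd_one).neg_one_pow
  simp only [transpose_apply, altAntidiag, of_apply]
  have := i.isLt; have := j.isLt
  split_ifs <;> first | ring1 | omega | (rw [show (i : ℕ) = N - 1 by omega, hodd]; ring1)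

theorem shift_map {S F : Type*} [CommRing S] [FunLike F R S] [RingHomClass F R S] (f : F)
    (a : R) : (shift N a).map f = shift N (f a) := by
  ext i j
  simp only [shift, map_apply, of_apply, apply_ite f, map_one, map_zero]

theorem scaledCayley_map {S F : Type*} [CommRing S] [FunLike F R S] [RingHomClass F R S] (f : F)
    (a : R) : (scaledCayley N a).map f = scaledCayley N (f a) := by
  ext i j
  simp only [scaledCayley, map_apply, of_apply, apply_ite f, map_add, map_mul, map_one,
    map_ofNat]

section Field

variable {K : Type*} [Field K] {a : K}

theorem one_sub_shift_mul_inv_smul_scaledResolvent (ha : a ≠ 1) :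
    (1 - shift N a) * ((1 - a)⁻¹ • scaledResolvent N a) = 1 := by
  rw [Matrix.mul_smul, one_sub_shift_mul_scaledResolvent, smul_smul,
    inv_mul_cancel₀ (sub_ne_zero.2 ha.symm), one_smul]

theorem one_add_shift_mul_inv_one_sub_shift (ha : a ≠ 1) :
    (1 + shift N a) * (1 - shift N a)⁻¹ = (1 - a)⁻¹ • scaledCayley N a := by
  rw [inv_eq_right_inv (one_sub_shift_mul_inv_smul_scaledResolvent ha), Matrix.mul_smul,
    one_add_shift_mul_scaledResolvent]

variable (hN : Even N) {c : K ≃+* K} (hca : c a = a)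
include hN hca

theorem one_add_shift_mul_twistedInvTranspose (ha : a ≠ 1) :
    (1 + shift N a) * twistedInvTranspose c (altAntidiag N) (1 + shift N a) =
      (1 - a)⁻¹ • scaledCayley N a := by
  have hJ : IsUnit (altAntidiag N : Matrix (Fin N) (Fin N) K).det :=
    isUnit_det_of_right_inverse (B := -altAntidiag N)
      (by rw [mul_neg, altAntidiag_mul_self hN, neg_neg])
  rw [twistedInvTranspose_one_add hJ (altAntidiag_mul_shift_transpose hN a)
      (by rw [shift_map, hca]),
    one_add_shift_mul_inv_one_sub_shift ha]

theorem inv_smul_scaledCayley_isometry (ha : a ≠ 1) :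
    (((1 - a)⁻¹ • scaledCayley N a).map c)ᵀ * altAntidiag N * ((1 - a)⁻¹ • scaledCayley N a) =
      altAntidiag N := by
  have hfix : ((1 - a)⁻¹ • scaledCayley N a).map c = (1 - a)⁻¹ • scaledCayley N a := by
    rw [map_smul' c _ _ (map_mul c), map_inv₀, map_sub, map_one, hca, scaledCayley_map, hca]
  rw [hfix, ← one_add_shift_mul_inv_one_sub_shift ha]
  exact cayley_transpose_mul_mul_cayley
    (transpose_mul_eq_neg_mul_of_mul_transpose (altAntidiag_mul_self hN)
      (altAntidiag_mul_shift_transpose hN a))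
    (isUnit_det_of_right_inverse (one_sub_shift_mul_inv_smul_scaledResolvent ha))

end Field

end CyclicShift

theorem stmt14_general (O E : Type) [CommRing O]
    [Field E] [Algebra O E] [IsFractionRing O E]
    (c : E ≃+* E)
    (ϖO : O) (hϖ : Irreducible ϖO) (u : Oˣ)
    (hϖc : c (algebraMap O E ϖO) = algebraMap O E ϖO)
    (huc : c (algebraMap O E (u : O)) = algebraMap O E (u : O))
    (n : ℕ) :
    let N := 2 * n
    let ϖ : E := algebraMap O E ϖO
    let v : E := algebraMap O E (u : O)
    let J : Matrix (Fin N) (Fin N) E := Matrix.of fun i j =>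
      if (i : ℕ) + (j : ℕ) + 1 = N then (-1 : E) ^ (i : ℕ) else 0
    let θ : Matrix (Fin N) (Fin N) E → Matrix (Fin N) (Fin N) E := fun g =>
      J * ((g.map (c : E → E)).transpose)⁻¹ * J⁻¹
    let φ : Matrix (Fin N) (Fin N) E := Matrix.of fun i j =>
      if (i : ℕ) + 1 = (j : ℕ) then 1
      else if (i : ℕ) = N - 1 ∧ (j : ℕ) = 0 then ϖ * v else 0
    let g := 1 + φ
    let M : Matrix (Fin N) (Fin N) E := Matrix.of fun i j =>
      if i = j then 1 + ϖ * v else if i < j then 2 else 2 * (ϖ * v)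
    g * θ g = (1 - ϖ * v)⁻¹ • M ∧
      ((g * θ g).map (c : E → E)).transpose * J * (g * θ g) = J := by
  intro N ϖ v J θ φ g M
  have hca : c (ϖ * v) = ϖ * v := by rw [map_mul, hϖc, huc]
  have ha : ϖ * v ≠ 1 := fun h => hϖ.not_isUnit <| IsUnit.of_mul_eq_one (u : O) <|
    IsFractionRing.injective O E (by rwa [map_mul, map_one])
  have hN : Even N := even_two_mul n
  have hnorm : g * θ g = (1 - ϖ * v)⁻¹ • M :=
    CyclicShift.one_add_shift_mul_twistedInvTranspose hN hca ha
  exact ⟨hnorm, hnorm ▸ CyclicShift.inv_smul_scaledCayley_isometry hN hca ha⟩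

/-- For `g = 1 + φ_u` in `GL_{2n}(E)`, the twisted norm `N(g) = g·θ(g)` equals
`(1 − ϖu)⁻¹·M` with `M` having diagonal entries `1 + ϖu`, entries `2` above the diagonal and
`2ϖu` below it; moreover `N(g)` lies in the unitary group, i.e. `ᵗc(N(g))·J·N(g) = J`. -/
theorem stmt14 (O E : Type) [CommRing O] [IsDomain O] [IsDiscreteValuationRing O]
    [Field E] [CharZero E] [Algebra O E] [IsFractionRing O E]
    (c : E ≃+* E) (hcc : ∀ x, c (c x) = x)
    (ϖO : O) (hϖ : Irreducible ϖO) (u : Oˣ)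
    (hϖc : c (algebraMap O E ϖO) = algebraMap O E ϖO)
    (huc : c (algebraMap O E (u : O)) = algebraMap O E (u : O))
    (n : ℕ) (hn : 0 < n) :
    let N := 2 * n
    let ϖ : E := algebraMap O E ϖO
    let v : E := algebraMap O E (u : O)
    let J : Matrix (Fin N) (Fin N) E := Matrix.of fun i j =>
      if (i : ℕ) + (j : ℕ) + 1 = N then (-1 : E) ^ (i : ℕ) else 0
    let θ : Matrix (Fin N) (Fin N) E → Matrix (Fin N) (Fin N) E := fun g =>
      J * ((g.map (c : E → E)).transpose)⁻¹ * J⁻¹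
    let φ : Matrix (Fin N) (Fin N) E := Matrix.of fun i j =>
      if (i : ℕ) + 1 = (j : ℕ) then 1
      else if (i : ℕ) = N - 1 ∧ (j : ℕ) = 0 then ϖ * v else 0
    let g := 1 + φ
    let M : Matrix (Fin N) (Fin N) E := Matrix.of fun i j =>
      if i = j then 1 + ϖ * v else if i < j then 2 else 2 * (ϖ * v)
    g * θ g = (1 - ϖ * v)⁻¹ • M ∧
      ((g * θ g).map (c : E → E)).transpose * J * (g * θ g) = J :=
  stmt14_general O E c ϖO hϖ u hϖc huc n
end
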